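/- Let X be a topological vector space, V a closed subspace of X with finite codimension, and W a dense subspace of X. Then X = V + W. -/

import Mathlib

/-- Let `X` be a topological vector space, `V` a closed subspace of `X` with finite
codimension (i.e. `X ⧸ V` is finite dimensional), and `W` a dense subspace of `X`.
Then `X = V + W`. -/
theorem closed_finiteCodim_sup_dense_eq_top
    {X : Type*} [AddCommGroup X] [Module ℝ X] [TopologicalSpace X]
    [IsTopologicalAddGroup X] [ContinuousSMul ℝ X]
    (V W : Submodule ℝ X) (hV : IsClosed (V : Set X))
    (hfin : FiniteDimensional ℝ (X ⧸ V))
    (hW : Dense (W : Set X)) :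
    V ⊔ W = ⊤ := by
  haveI : IsClosed (V : Set X) := hV
  haveI : T3Space (X ⧸ V) := Submodule.t3_quotient_of_isClosed V
  have hdense : Dense ((W.map V.mkQ : Submodule ℝ (X ⧸ V)) : Set (X ⧸ V)) := by
    have : V.mkQ '' (W : Set X) ⊆ (W.map V.mkQ : Set (X ⧸ V)) := by
      rintro _ ⟨x, hx, rfl⟩; exact ⟨x, hx, rfl⟩
    refine Dense.mono this ?_
    have hsurj : Function.Surjective V.mkQ := Submodule.mkQ_surjective V
    have hc : Continuous V.mkQ := continuous_quot_mk
    intro y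
    obtain ⟨x, rfl⟩ := hsurj y
    exact image_closure_subset_closure_image hc ⟨x, hW x, rfl⟩
  haveI : FiniteDimensional ℝ (W.map V.mkQ) := FiniteDimensional.finiteDimensional_submodule _
  have hclosed : IsClosed ((W.map V.mkQ : Submodule ℝ (X ⧸ V)) : Set (X ⧸ V)) :=
    Submodule.closed_of_finiteDimensional _
  have htop : W.map V.mkQ = ⊤ := by
    rw [← SetLike.coe_set_eq, Submodule.top_coe]
    rw [← hclosed.closure_eq]
    exact hdense.closure_eq
  have := congrArg (Submodule.comap V.mkQ) htop
  rwa [Submodule.comap_map_eq, Submodule.comap_top, Submodule.ker_mkQ, sup_comm] at this
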